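/- Let S = R[T_1,...,T_n] be a polynomial ring over a Noetherian ring R and let J, L, Y be ideals of S with L ⊆ J, where Y = (Y_1,...,Y_{e-1}) is generated by a sequence that is regular modulo J. If J + Y = L + Y, then J = L. -/

import Mathlib

/-!
Induction along the regular sequence reduces everything to one element `y` of positive degree `m`
that is regular modulo `J`, with `J + (y) = L + (y)`. A homogeneous `x ∈ J` of degree `d` is then
`l + y s` with `l ∈ L`; comparing degree-`d` components, `y s_{d-m} = x - l_d ∈ J`, so
`s_{d-m} ∈ J` by regularity and `s_{d-m} ∈ L` by induction on the degree. Hence `x ∈ L`.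
-/

set_option synthInstance.maxHeartbeats 1000000
set_option maxHeartbeats 2000000

open Order MvPolynomial

/-- The height of an ideal: the infimum of heights of primes containing it. -/
noncomputable def idealHeight {R : Type*} [CommRing R] (I : Ideal R) : ℕ∞ :=
  ⨅ (p : PrimeSpectrum R) (_ : I ≤ p.asIdeal), Order.height p

/-- The ideal of `t × t` minors of a matrix. -/
noncomputable def minorsIdeal {R : Type*} [CommRing R] {m n : ℕ} (t : ℕ)
    (M : Matrix (Fin m) (Fin n) R) : Ideal R :=
  Ideal.span {x | ∃ (r : Fin t → Fin m) (c : Fin t → Fin n),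
    Function.Injective r ∧ Function.Injective c ∧ x = (M.submatrix r c).det}

/-- The minimal number of generators of a module. -/
noncomputable def mu (R M : Type*) [CommRing R] [AddCommGroup M] [Module R M] : ℕ :=
  sInf {k : ℕ | ∃ f : Fin k → M, Submodule.span R (Set.range f) = ⊤}

/-- The `G_s` condition for a module of rank `e` presented by an `n × m` matrix `φ`
(so that `Fitt_i = I_{n-i}(φ)`), expressed via heights of Fitting ideals:
`ht Fitt_i ≥ i - e + 2` for all `e ≤ i ≤ s + e - 2`. -/
def moduleG {R : Type*} [CommRing R] {n m : ℕ} (φ : Matrix (Fin n) (Fin m) R)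
    (e s : ℕ) : Prop :=
  ∀ i : ℕ, e ≤ i → i ≤ s + e - 2 →
    ((i - e + 2 : ℕ) : ℕ∞) ≤ idealHeight (minorsIdeal (n - i) φ)

/-- Existence of a regular sequence of length `k` inside the ideal `I`. -/
def hasRegSeq (R : Type*) [CommRing R] (I : Ideal R) (k : ℕ) : Prop :=
  ∃ rs : List R, rs.length = k ∧ (∀ r ∈ rs, r ∈ I) ∧ RingTheory.Sequence.IsRegular R rs

/-- A local ring is Cohen-Macaulay if its maximal ideal contains a regular sequence of
length `k` for every natural number `k` below the Krull dimension (depth = dimension). -/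
def IsCMLocalRing (R : Type*) [CommRing R] [IsLocalRing R] : Prop :=
  ∀ k : ℕ, ((k : ℕ∞) : WithBot ℕ∞) ≤ ringKrullDim R →
    hasRegSeq R (IsLocalRing.maximalIdeal R) k

/-- A ring is Cohen-Macaulay if all its localizations at primes are Cohen-Macaulay. -/
def IsCMRing (R : Type*) [CommRing R] : Prop :=
  ∀ p : PrimeSpectrum R, IsCMLocalRing (Localization.AtPrime p.asIdeal)

open DirectSum RingTheory.Sequence

section RegularSequence

variable {A : Type*} [CommRing A]

open Pointwise in
noncomputable def Ideal.quotSMulTopEquivQuotSup (J : Ideal A) (y : A) :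
    QuotSMulTop y (A ⧸ J) ≃ₗ[A] A ⧸ (J ⊔ Ideal.span {y}) :=
  Submodule.quotEquivOfEq _ _
      (by rw [Ideal.Quotient.smul_top, Submodule.map_span, Set.image_singleton]; rfl) ≪≫ₗ
    Submodule.quotientQuotientEquivQuotientSup J (Ideal.span {y})

theorem Ideal.mem_of_mul_mem_of_isSMulRegular {J : Ideal A} {y a : A}
    (hy : IsSMulRegular (A ⧸ J) y) (h : y * a ∈ J) : a ∈ J := by
  rw [← Ideal.Quotient.eq_zero_iff_mem] at h ⊢
  exact hy (by simpa [Algebra.smul_def] using h)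

theorem isWeaklyRegular_quotient_sup_of_cons {J : Ideal A} {y : A} {ys : List A}
    (h : IsWeaklyRegular (A ⧸ J) (y :: ys)) :
    IsWeaklyRegular (A ⧸ (J ⊔ Ideal.span {y})) ys :=
  ((J.quotSMulTopEquivQuotSup y).isWeaklyRegular_congr ys).1
    ((isWeaklyRegular_cons_iff _ y ys).1 h).2

end RegularSequence

section GradedRing

variable {A σ : Type*} [CommRing A] [SetLike σ A] [AddSubgroupClass σ A] (𝒜 : ℕ → σ)
  [GradedRing 𝒜]

theorem Ideal.IsHomogeneous.le_of_forall_homogeneous_mem {J L : Ideal A}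
    (hJ : J.IsHomogeneous 𝒜) (hL : L.IsHomogeneous 𝒜)
    (h : ∀ d, ∀ x ∈ 𝒜 d, x ∈ J → x ∈ L) : J ≤ L := fun _ hx =>
  (hL.mem_iff 𝒜).2 fun d => h d _ (SetLike.coe_mem _) (hJ d hx)

theorem Ideal.IsHomogeneous.eq_of_sup_span_singleton_eq {J L : Ideal A}
    (hJ : J.IsHomogeneous 𝒜) (hL : L.IsHomogeneous 𝒜) (hLJ : L ≤ J) {y : A} {m : ℕ}
    (hm : 0 < m) (hy : y ∈ 𝒜 m) (hreg : ∀ a, y * a ∈ J → a ∈ J)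
    (heq : J ⊔ Ideal.span {y} = L ⊔ Ideal.span {y}) : J = L := by
  refine le_antisymm (hJ.le_of_forall_homogeneous_mem 𝒜 hL fun d => ?_) hLJ
  induction d using Nat.strong_induction_on with
  | _ d ih =>
    intro x hxd hxJ
    obtain ⟨l, hl, z, hz, rfl⟩ := Submodule.mem_sup.1 (heq ▸ Ideal.mem_sup_left hxJ)
    obtain ⟨s, rfl⟩ := Ideal.mem_span_singleton.1 hz
    have hx : l + y * s = (decompose 𝒜 l d : A) + decompose 𝒜 (y * s) d := by
      rw [← decompose_of_mem_same 𝒜 hxd, decompose_add, DirectSum.add_apply, AddMemClass.coe_add]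
    have hld : (decompose 𝒜 l d : A) ∈ L := hL d hl
    rw [hx]
    by_cases hmd : m ≤ d
    · rw [coe_decompose_mul_of_left_mem_of_le 𝒜 hy hmd] at hx ⊢
      have hysJ : y * decompose 𝒜 s (d - m) ∈ J := by
        rw [← add_sub_cancel_left (decompose 𝒜 l d : A) (y * _), ← hx]
        exact sub_mem hxJ (hLJ hld)
      exact add_mem hld <| Ideal.mul_mem_left _ _ <|
        ih (d - m) (by omega) _ (SetLike.coe_mem _) (hreg _ hysJ)
    · rw [coe_decompose_mul_of_left_mem_of_not_le 𝒜 hy hmd, add_zero]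
      exact hld

theorem Ideal.IsHomogeneous.eq_of_sup_ofList_eq {ys : List A}
    (hys : ∀ y ∈ ys, ∃ m, 0 < m ∧ y ∈ 𝒜 m) {J L : Ideal A}
    (hJ : J.IsHomogeneous 𝒜) (hL : L.IsHomogeneous 𝒜) (hLJ : L ≤ J)
    (hreg : IsWeaklyRegular (A ⧸ J) ys) (heq : J ⊔ Ideal.ofList ys = L ⊔ Ideal.ofList ys) :
    J = L := by
  induction ys generalizing J L with
  | nil => simpa using heq
  | cons y ys ih =>
    obtain ⟨m, hm, hy⟩ := hys y List.mem_cons_self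
    have hyhom : (Ideal.span {y}).IsHomogeneous 𝒜 :=
      Ideal.homogeneous_span 𝒜 _ (by simpa using ⟨m, hy⟩)
    refine hJ.eq_of_sup_span_singleton_eq 𝒜 hL hLJ hm hy ?_ ?_
    · exact fun a => Ideal.mem_of_mul_mem_of_isSMulRegular
        ((isWeaklyRegular_cons_iff _ y ys).1 hreg).1
    · refine ih (fun z hz => hys z (List.mem_cons_of_mem y hz)) (hJ.sup hyhom) (hL.sup hyhom)
        (sup_le_sup_right hLJ _) (isWeaklyRegular_quotient_sup_of_cons hreg) ?_
      simpa only [Ideal.ofList_cons, sup_assoc] using heq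

end GradedRing

attribute [local instance] MvPolynomial.gradedAlgebra in
theorem MvPolynomial.isHomogeneous_span {σ R : Type*} [CommRing R] {G : Set (MvPolynomial σ R)}
    (hG : ∀ g ∈ G, ∃ t, g.IsHomogeneous t) :
    (Ideal.span G).IsHomogeneous (homogeneousSubmodule σ R) :=
  Ideal.homogeneous_span _ G fun g hg =>
    (hG g hg).imp fun _ ht => (mem_homogeneousSubmodule _ _).2 ht

attribute [local instance] MvPolynomial.gradedAlgebra in
theorem stmt_13_general {R : Type*} [CommRing R] (n e : ℕ)
    (J L : Ideal (MvPolynomial (Fin n) R)) (hLJ : L ≤ J)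
    (Y : Fin (e - 1) → MvPolynomial (Fin n) R)
    (hY : ∀ i, (Y i).IsHomogeneous 1)
    -- `L` and `J` are generated by homogeneous elements of positive `T`-degree:
    (hLhom : ∃ G : Set (MvPolynomial (Fin n) R),
      (∀ g ∈ G, ∃ t, 0 < t ∧ MvPolynomial.IsHomogeneous g t) ∧ L = Ideal.span G)
    (hJhom : ∃ G : Set (MvPolynomial (Fin n) R),
      (∀ g ∈ G, ∃ t, 0 < t ∧ MvPolynomial.IsHomogeneous g t) ∧ J = Ideal.span G)
    -- `Y_1, …, Y_{e-1}` is a regular sequence modulo `J`: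
    (hreg : RingTheory.Sequence.IsRegular (MvPolynomial (Fin n) R ⧸ J) (List.ofFn Y))
    (heq : J ⊔ Ideal.span (Set.range Y) = L ⊔ Ideal.span (Set.range Y)) :
    J = L := by
  obtain ⟨G, hG, rfl⟩ := hLhom
  obtain ⟨G', hG', rfl⟩ := hJhom
  have hofList : Ideal.ofList (List.ofFn Y) = Ideal.span (Set.range Y) := by
    simp only [Ideal.ofList, List.mem_ofFn', Set.ofPred_mem_eq]
  refine Ideal.IsHomogeneous.eq_of_sup_ofList_eq (homogeneousSubmodule (Fin n) R) ?_
    (isHomogeneous_span fun g hg => (hG' g hg).imp fun _ => And.right)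
    (isHomogeneous_span fun g hg => (hG g hg).imp fun _ => And.right)
    hLJ hreg.toIsWeaklyRegular (hofList ▸ heq)
  exact List.forall_mem_ofFn_iff.2 fun i => ⟨1, one_pos, (mem_homogeneousSubmodule _ _).2 (hY i)⟩

/-- Nakayama-type argument: in `S = R[T_1, …, T_n]`, if `L ⊆ J` are ideals
generated in positive `T`-degrees, `Y_1, …, Y_{e-1}` are linear forms in the `T`-variables
forming a regular sequence modulo `J`, and `J + (Y) = L + (Y)`, then `J = L`. -/
theorem stmt_13 {R : Type*} [CommRing R] [IsNoetherianRing R] (n e : ℕ)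
    (J L : Ideal (MvPolynomial (Fin n) R)) (hLJ : L ≤ J)
    (Y : Fin (e - 1) → MvPolynomial (Fin n) R)
    (hY : ∀ i, (Y i).IsHomogeneous 1)
    -- `L` and `J` are generated by homogeneous elements of positive `T`-degree:
    (hLhom : ∃ G : Set (MvPolynomial (Fin n) R),
      (∀ g ∈ G, ∃ t, 0 < t ∧ MvPolynomial.IsHomogeneous g t) ∧ L = Ideal.span G)
    (hJhom : ∃ G : Set (MvPolynomial (Fin n) R),
      (∀ g ∈ G, ∃ t, 0 < t ∧ MvPolynomial.IsHomogeneous g t) ∧ J = Ideal.span G)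
    -- `Y_1, …, Y_{e-1}` is a regular sequence modulo `J`:
    (hreg : RingTheory.Sequence.IsRegular (MvPolynomial (Fin n) R ⧸ J) (List.ofFn Y))
    (heq : J ⊔ Ideal.span (Set.range Y) = L ⊔ Ideal.span (Set.range Y)) :
    J = L :=
  stmt_13_general n e J L hLJ Y hY hLhom hJhom hreg heq
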